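/- For 1<q<p and every t ∈ [0,1), one has q ω_p(t)^{q−1} − (q−1) ω_p(t)^q > t^{(q−1)/(p−1)}, i.e., H_q(ω_p(t)) > t^{(q−1)/(p−1)}. -/

import Mathlib

/-!
Write `H_r(z) = r z^(r-1) - (r-1) z^r = z^(r-1) (1 - (r-1)(z-1))`. For `z = ω_p(t)` and
`θ = (q-1)/(p-1)` this gives `t^θ = z^(q-1) (1 - (p-1)(z-1))^θ`, while `H_q(z) = z^(q-1) (1 - θ(p-1)(z-1))`,
so the claim is the strict Bernoulli inequality `(1 + s)^θ < 1 + θ s` for `0 < θ < 1`, `s = -(p-1)(z-1) ≠ 0`.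
Here `z > 1` because `H_p(1) = 1 ≠ t`.
-/

open Real Set

noncomputable def H (r z : ℝ) : ℝ := r * z ^ (r - 1) - (r - 1) * z ^ r

lemma H_one (r : ℝ) : H r 1 = 1 := by
  simp [H]

lemma H_eq_mul {z : ℝ} (r : ℝ) (hz : 0 < z) : H r z = z ^ (r - 1) * (1 - (r - 1) * (z - 1)) := by
  have hzr : z ^ r = z ^ (r - 1) * z := by
    rw [← rpow_add_one hz.ne', sub_add_cancel]
  rw [H, hzr]
  ring

lemma rpow_H_lt_H {p q z : ℝ} (hq : 1 < q) (hpq : q < p) (hz : 1 < z) (hHp : 0 ≤ H p z) :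
    H p z ^ ((q - 1) / (p - 1)) < H q z := by
  have hz0 : 0 < z := one_pos.trans hz
  have hp : 0 < p - 1 := by linarith
  set θ := (q - 1) / (p - 1)
  set s := -((p - 1) * (z - 1))
  have hθ0 : 0 < θ := div_pos (by linarith) hp
  have hθ1 : θ < 1 := (div_lt_one hp).mpr (by linarith)
  have hθs : θ * s = -((q - 1) * (z - 1)) := by
    simp only [θ, s]
    field_simp
  have hzp : 0 < z ^ (p - 1) := rpow_pos_of_pos hz0 _
  have hs : -1 ≤ s := by
    rw [H_eq_mul p hz0] at hHp
    linarith [(mul_nonneg_iff_of_pos_left hzp).mp hHp]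
  have hs0 : s ≠ 0 := by
    have : 0 < (p - 1) * (z - 1) := mul_pos hp (by linarith)
    linarith
  have hpow : (z ^ (p - 1)) ^ θ = z ^ (q - 1) := by
    rw [← rpow_mul hz0.le]
    congr 1
    simp only [θ]
    field_simp
  calc H p z ^ θ = z ^ (q - 1) * (1 + s) ^ θ := by
        rw [H_eq_mul p hz0, mul_rpow hzp.le (by linarith), hpow, ← sub_eq_add_neg]
    _ < z ^ (q - 1) * (1 + θ * s) :=
        mul_lt_mul_of_pos_left (rpow_one_add_lt_one_add_mul_self hs hs0 hθ0 hθ1)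
          (rpow_pos_of_pos hz0 _)
    _ = H q z := by rw [H_eq_mul q hz0, hθs, ← sub_eq_add_neg]

/-- For `1 < q < p` and every `t ∈ [0,1)`,
`q ω_p(t)^(q-1) - (q-1) ω_p(t)^q > t^((q-1)/(p-1))`, i.e. `H_q(ω_p(t)) > t^((q-1)/(p-1))`. -/
theorem Hq_omega_p_gt (p q : ℝ) (hq : 1 < q) (hpq : q < p)
    (ωp : ℝ → ℝ)
    (hωp : ∀ s ∈ Icc (0 : ℝ) 1, ωp s ∈ Icc 1 (p / (p - 1)) ∧
      p * ωp s ^ (p - 1) - (p - 1) * ωp s ^ p = s) :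
    ∀ t ∈ Ico (0 : ℝ) 1,
      q * ωp t ^ (q - 1) - (q - 1) * ωp t ^ q > t ^ ((q - 1) / (p - 1)) := by
  rintro t ⟨ht0, ht1⟩
  obtain ⟨⟨hz1, -⟩, hHt⟩ := hωp t ⟨ht0, ht1.le⟩
  change H p (ωp t) = t at hHt
  have hz : 1 < ωp t := by
    refine lt_of_le_of_ne hz1 fun h => ?_
    rw [← h, H_one] at hHt
    exact ht1.ne' hHt
  have key := rpow_H_lt_H hq hpq hz (ht0.trans_eq hHt.symm)
  rwa [hHt] at key
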